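/- Let Σ be a finite nonempty alphabet. The class LMO(Σ) is closed under intersection, union and complement: if L₁, L₂ ∈ LMO(Σ), then L₁ ∩ L₂ ∈ LMO(Σ), L₁ ∪ L₂ ∈ LMO(Σ), and Σ* ∖ L₁ ∈ LMO(Σ). -/

import Mathlib

open Matrix

/-- A Measure-Only one-way quantum finite automaton (MOn-1qfa) over the alphabet `σ`
(the letter `none` plays the role of the end-marker `#`).  The data consists of:
the number of states `m`, for each letter `c` (and the end-marker) the number `k c`
of distinct eigenvalues of the observable `O_c`, the eigenvalues `eig c` themselves,
the corresponding orthogonal projectors `P c`, the initial (row) vector `init`,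
and the set `F` of (indices of) accepting eigenvalues of the end-marker observable. -/
structure MOnQFA (σ : Type) where
  m : ℕ
  k : Option σ → ℕ
  eig : (c : Option σ) → Fin (k c) → ℝ
  P : (c : Option σ) → Fin (k c) → Matrix (Fin m) (Fin m) ℂ
  init : Matrix (Fin 1) (Fin m) ℂ
  F : Finset (Fin (k none))

namespace MOnQFA

variable {σ : Type}

/-- Well-formedness of a MOn-1qfa: the eigenvalues of each observable are distinct,
the `P c j` are pairwise orthogonal Hermitian idempotents (orthogonal projectors)
summing to the identity (so that `O_c = ∑ j, eig c j • P c j` is a Hermitian matrix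
with spectral decomposition given by the data), and the initial vector has norm 1. -/
def Valid (A : MOnQFA σ) : Prop :=
  (∀ c, Function.Injective (A.eig c)) ∧
  (∀ c j, (A.P c j)ᴴ = A.P c j) ∧
  (∀ c j, A.P c j * A.P c j = A.P c j) ∧
  (∀ c j j', j ≠ j' → A.P c j * A.P c j' = 0) ∧
  (∀ c, ∑ j, A.P c j = 1) ∧
  (∑ i, Complex.normSq (A.init 0 i) = 1)

/-- The density matrix `σ(w)` reached after reading the word `w`:
`σ(ε) = π₀† π₀` and `σ(yc) = ∑ j, P_j(c) σ(y) P_j(c)`. -/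
noncomputable def dens (A : MOnQFA σ) (w : List σ) : Matrix (Fin A.m) (Fin A.m) ℂ :=
  w.foldl (fun ρ c => ∑ j, A.P (some c) j * ρ * A.P (some c) j) (A.initᴴ * A.init)

/-- The acceptance probability `p_A(w) = Tr (∑_{j ∈ F} P_j(#) σ(w) P_j(#))`. -/
noncomputable def prob (A : MOnQFA σ) (w : List σ) : ℝ :=
  (Matrix.trace (∑ j ∈ A.F, A.P none j * A.dens w * A.P none j)).re

end MOnQFA

/-- `LMO σ` : the class of languages recognized by some MOn-1qfa over `σ`
with an isolated cut-point. -/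
def LMO (σ : Type) : Set (Set (List σ)) :=
  {L | ∃ A : MOnQFA σ, A.Valid ∧ ∃ lam δ : ℝ, 0 < lam ∧ 0 < δ ∧
        (∀ w, |A.prob w - lam| ≥ δ) ∧ L = {w | A.prob w > lam}}

/-- `PMO σ` : the class of probabilistic events induced by MOn-1qfas over `σ`. -/
def PMO (σ : Type) : Set (List σ → ℝ) :=
  {φ | ∃ A : MOnQFA σ, A.Valid ∧ φ = A.prob}

/-!
Acceptance probabilities of measure-only automata are closed under three operations: the tensor
product of two automata multiplies them, complementing the accepting outcomes gives `1 - p`, and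
the direct sum started in `√a ψ ⊕ √(1 - a) ψ'` gives the convex combination `a p + (1 - a) p'`.
Composing them realises a polynomial `G` with `G (1/2 + y) = 1/2 + 5y/4 - y³`, which pushes values
away from `1/2`. After moving an isolated cut-point to `1/2`, finitely many applications of `G`
give an event that is `≥ 3/4` on the language and `≤ 1/4` off it. For two such events the product
isolates the intersection at `13/32`, `1 - p` isolates the complement, and De Morgan gives the
union.
-/

open Kronecker ComplexOrder

namespace Matrix

variable {l m n R : Type*}

lemma trace_submatrix_equiv [Fintype m] [Fintype n] [AddCommMonoid R]
    (M : Matrix n n R) (e : m ≃ n) : (M.submatrix e e).trace = M.trace :=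
  e.sum_comp fun i => M i i

lemma trace_fromBlocks [Fintype m] [Fintype n] [AddCommMonoid R] (A : Matrix m m R)
    (B : Matrix m n R) (C : Matrix n m R) (D : Matrix n n R) :
    (fromBlocks A B C D).trace = A.trace + D.trace :=
  Fintype.sum_sum_type _

lemma submatrix_sum {ι o : Type*} [AddCommMonoid R] (s : Finset ι) (A : ι → Matrix m n R)
    (r : l → m) (c : o → n) : (∑ i ∈ s, A i).submatrix r c = ∑ i ∈ s, (A i).submatrix r c := by
  ext i j
  simp [sum_apply]

lemma sum_fromBlocks {ι o : Type*} [AddCommMonoid R] (s : Finset ι) (A : ι → Matrix n l R)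
    (B : ι → Matrix n m R) (C : ι → Matrix o l R) (D : ι → Matrix o m R) :
    ∑ i ∈ s, fromBlocks (A i) (B i) (C i) (D i)
      = fromBlocks (∑ i ∈ s, A i) (∑ i ∈ s, B i) (∑ i ∈ s, C i) (∑ i ∈ s, D i) := by
  ext (i | i) (j | j) <;> simp [sum_apply]

lemma sum_kronecker_sum {ι ι' m' n' : Type*} [CommSemiring R] (s : Finset ι) (t : Finset ι')
    (A : ι → Matrix m n R) (B : ι' → Matrix m' n' R) :
    (∑ i ∈ s, A i) ⊗ₖ (∑ j ∈ t, B j) = ∑ p ∈ s ×ˢ t, A p.1 ⊗ₖ B p.2 := by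
  ext ⟨i, i'⟩ ⟨j, j'⟩
  simp [sum_apply, Finset.sum_mul_sum, Finset.sum_product]

lemma conjTranspose_mul_self_kronecker_submatrix {l₁ l₂ m' : Type*} [Fintype l] [Fintype l₁]
    [Fintype l₂] [CommSemiring R] [StarRing R] (e : l ≃ l₁ × l₂) (u : Matrix l₁ m R)
    (v : Matrix l₂ m' R) :
    ((u ⊗ₖ v).submatrix e id)ᴴ * (u ⊗ₖ v).submatrix e id = (uᴴ * u) ⊗ₖ (vᴴ * v) := by
  rw [conjTranspose_submatrix, submatrix_mul_equiv, submatrix_id_id, conjTranspose_kronecker,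
    ← mul_kronecker_mul]

lemma conjTranspose_mul_self_sqrt_smul [Fintype l] (r : ℝ) (hr : 0 ≤ r) (u : Matrix l m ℂ) :
    ((Real.sqrt r : ℂ) • u)ᴴ * ((Real.sqrt r : ℂ) • u) = (r : ℂ) • (uᴴ * u) := by
  rw [conjTranspose_smul, Complex.star_def, Complex.conj_ofReal, Matrix.smul_mul, Matrix.mul_smul, smul_smul,
    ← Complex.ofReal_mul, Real.mul_self_sqrt hr]

lemma trace_conjTranspose_mul_self_row [Fintype m] (u : Matrix (Fin 1) m ℂ) :
    (uᴴ * u).trace = ∑ i, (Complex.normSq (u 0 i) : ℂ) := by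
  simp [trace, mul_apply, Complex.normSq_eq_conj_mul_self]

end Matrix

structure PVM (κ ι : Type*) [Fintype κ] [Fintype ι] [DecidableEq ι] where
  P : κ → Matrix ι ι ℂ
  isHermitian : ∀ j, (P j).IsHermitian
  mul_self : ∀ j, P j * P j = P j
  mul_eq_zero : ∀ j j', j ≠ j' → P j * P j' = 0
  sum_eq_one : ∑ j, P j = 1

namespace PVM

variable {κ ι κ' ι' : Type*} [Fintype κ] [Fintype ι] [DecidableEq ι]
  [Fintype κ'] [Fintype ι'] [DecidableEq ι']

/-- The unnormalised post-measurement state, given that the outcome lies in `s`. -/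
def luders (M : PVM κ ι) (s : Finset κ) (ρ : Matrix ι ι ℂ) : Matrix ι ι ℂ :=
  ∑ j ∈ s, M.P j * ρ * M.P j

variable (M : PVM κ ι) (N : PVM κ' ι')

lemma luders_smul (s : Finset κ) (r : ℂ) (ρ : Matrix ι ι ℂ) :
    M.luders s (r • ρ) = r • M.luders s ρ := by
  simp only [luders, Finset.smul_sum, mul_smul_comm, smul_mul_assoc]

lemma luders_add_luders_compl [DecidableEq κ] (s : Finset κ) (ρ : Matrix ι ι ℂ) :
    M.luders s ρ + M.luders sᶜ ρ = M.luders Finset.univ ρ :=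
  Finset.sum_add_sum_compl s _

lemma posSemidef_luders (s : Finset κ) {ρ : Matrix ι ι ℂ} (hρ : ρ.PosSemidef) :
    (M.luders s ρ).PosSemidef :=
  posSemidef_sum s fun j _ => by
    simpa only [(M.isHermitian j).eq] using hρ.mul_mul_conjTranspose_same (M.P j)

lemma trace_luders_univ (ρ : Matrix ι ι ℂ) : (M.luders Finset.univ ρ).trace = ρ.trace := by
  simp_rw [luders, trace_sum, trace_mul_cycle (M.P _) ρ, M.mul_self, ← trace_sum,
    ← Finset.sum_mul, M.sum_eq_one, one_mul]

def one : PVM Unit ι where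
  P _ := 1
  isHermitian _ := isHermitian_one
  mul_self _ := mul_one 1
  mul_eq_zero j j' h := absurd (Subsingleton.elim j j') h
  sum_eq_one := Fintype.sum_unique _

def reindex (eκ : κ ≃ κ') (eι : ι ≃ ι') : PVM κ' ι' where
  P j := (M.P (eκ.symm j)).submatrix eι.symm eι.symm
  isHermitian j := (M.isHermitian _).submatrix _
  mul_self j := by rw [submatrix_mul_equiv, M.mul_self]
  mul_eq_zero j j' h := by
    rw [submatrix_mul_equiv, M.mul_eq_zero _ _ (eκ.symm.injective.ne h), submatrix_zero]
    rfl
  sum_eq_one := by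
    rw [← submatrix_sum, eκ.symm.sum_comp (fun j => M.P j), M.sum_eq_one, submatrix_one_equiv]

lemma luders_reindex (eκ : κ ≃ κ') (eι : ι ≃ ι') (s : Finset κ) (ρ : Matrix ι ι ℂ) :
    (M.reindex eκ eι).luders (s.map eκ.toEmbedding) (ρ.submatrix eι.symm eι.symm)
      = (M.luders s ρ).submatrix eι.symm eι.symm := by
  simp [luders, reindex, submatrix_sum, submatrix_mul_equiv]

def tensor : PVM (κ × κ') (ι × ι') where
  P j := M.P j.1 ⊗ₖ N.P j.2
  isHermitian j := by
    rw [IsHermitian, conjTranspose_kronecker, (M.isHermitian _).eq, (N.isHermitian _).eq]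
  mul_self j := by rw [← mul_kronecker_mul, M.mul_self, N.mul_self]
  mul_eq_zero j j' h := by
    rw [← mul_kronecker_mul]
    by_cases h₁ : j.1 = j'.1
    · rw [N.mul_eq_zero _ _ fun h₂ => h (Prod.ext h₁ h₂), kronecker_zero]
    · rw [M.mul_eq_zero _ _ h₁, zero_kronecker]
  sum_eq_one := by
    rw [← Finset.univ_product_univ, ← sum_kronecker_sum, M.sum_eq_one, N.sum_eq_one,
      one_kronecker_one]

lemma luders_tensor (s : Finset κ) (t : Finset κ') (ρ : Matrix ι ι ℂ) (τ : Matrix ι' ι' ℂ) :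
    (M.tensor N).luders (s ×ˢ t) (ρ ⊗ₖ τ) = M.luders s ρ ⊗ₖ N.luders t τ := by
  simp only [luders, sum_kronecker_sum, tensor, mul_kronecker_mul]

def sum : PVM (κ ⊕ κ') (ι ⊕ ι') where
  P := Sum.elim (fun j => fromBlocks (M.P j) 0 0 0) (fun j => fromBlocks 0 0 0 (N.P j))
  isHermitian j := by
    cases j <;> simp [IsHermitian, fromBlocks_conjTranspose, (M.isHermitian _).eq,
      (N.isHermitian _).eq]
  mul_self j := by cases j <;> simp [fromBlocks_multiply, M.mul_self, N.mul_self]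
  mul_eq_zero j j' h := by
    rcases j with j | j <;> rcases j' with j' | j' <;>
      simp_all [fromBlocks_multiply, M.mul_eq_zero, N.mul_eq_zero]
  sum_eq_one := by
    simp [Fintype.sum_sum_type, sum_fromBlocks, fromBlocks_add, M.sum_eq_one, N.sum_eq_one]

lemma luders_sum (s : Finset κ) (t : Finset κ') (ρ : Matrix (ι ⊕ ι') (ι ⊕ ι') ℂ) :
    (M.sum N).luders (s.disjSum t) ρ
      = fromBlocks (M.luders s ρ.toBlocks₁₁) 0 0 (N.luders t ρ.toBlocks₂₂) := by
  conv_lhs => rw [← fromBlocks_toBlocks ρ]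
  simp [luders, sum, Finset.sum_disjSum, fromBlocks_multiply, sum_fromBlocks, fromBlocks_add]

end PVM

/-- A `MOnQFA` with arbitrary finite types of states and of outcomes, so that tensor products and
direct sums need no reindexing to `Fin`. The eigenvalues are dropped: acceptance depends only on
the projectors. -/
structure QFA (σ ι : Type) (κ : Option σ → Type) [Fintype ι] [DecidableEq ι]
    [∀ c, Fintype (κ c)] where
  meas : ∀ c, PVM (κ c) ι
  init : Matrix (Fin 1) ι ℂ
  trace_init : (initᴴ * init).trace = 1
  F : Finset (κ none)

namespace QFA

variable {σ ι ι' : Type} {κ κ' : Option σ → Type} [Fintype ι] [DecidableEq ι]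
  [∀ c, Fintype (κ c)] [Fintype ι'] [DecidableEq ι'] [∀ c, Fintype (κ' c)]

def run (Q : QFA σ ι κ) (ρ : Matrix ι ι ℂ) (w : List σ) : Matrix ι ι ℂ :=
  w.foldl (fun ρ c => (Q.meas (some c)).luders Finset.univ ρ) ρ

def dens (Q : QFA σ ι κ) (w : List σ) : Matrix ι ι ℂ :=
  Q.run (Q.initᴴ * Q.init) w

noncomputable def prob (Q : QFA σ ι κ) (w : List σ) : ℝ :=
  ((Q.meas none).luders Q.F (Q.dens w)).trace.re

section Basic

variable (Q : QFA σ ι κ)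

lemma posSemidef_dens (w : List σ) : (Q.dens w).PosSemidef :=
  w.foldlRecOn _ (posSemidef_conjTranspose_mul_self _) fun _ hρ _ _ =>
    PVM.posSemidef_luders _ _ hρ

lemma trace_dens (w : List σ) : (Q.dens w).trace = 1 :=
  w.foldlRecOn (motive := fun ρ : Matrix ι ι ℂ => ρ.trace = 1) _ Q.trace_init fun _ hρ _ _ =>
    (PVM.trace_luders_univ _ _).trans hρ

lemma trace_luders_dens_nonneg (s : Finset (κ none)) (w : List σ) :
    0 ≤ ((Q.meas none).luders s (Q.dens w)).trace :=
  ((Q.meas none).posSemidef_luders s (Q.posSemidef_dens w)).trace_nonneg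

lemma ofReal_prob (w : List σ) :
    (Q.prob w : ℂ) = ((Q.meas none).luders Q.F (Q.dens w)).trace :=
  Complex.ext rfl (by simpa using (Complex.nonneg_iff.mp (Q.trace_luders_dens_nonneg Q.F w)).2)

lemma prob_nonneg (w : List σ) : 0 ≤ Q.prob w :=
  (Complex.nonneg_iff.mp (Q.trace_luders_dens_nonneg Q.F w)).1

def compl [DecidableEq (κ none)] : QFA σ ι κ := { Q with F := Q.Fᶜ }

lemma prob_compl [DecidableEq (κ none)] (w : List σ) : Q.compl.prob w = 1 - Q.prob w := by
  have h := congrArg trace ((Q.meas none).luders_add_luders_compl Q.F (Q.dens w))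
  rw [trace_add, PVM.trace_luders_univ, trace_dens, ← ofReal_prob] at h
  have h' : (Q.compl.prob w : ℂ) = 1 - Q.prob w := by
    rw [ofReal_prob]
    exact eq_sub_of_add_eq' h
  exact_mod_cast h'

lemma prob_le_one (w : List σ) : Q.prob w ≤ 1 := by
  classical
  linarith [Q.compl.prob_nonneg w, Q.prob_compl w]

lemma run_smul (r : ℂ) (ρ : Matrix ι ι ℂ) (w : List σ) : Q.run (r • ρ) w = r • Q.run ρ w :=
  List.foldl_hom (r • ·) fun _ _ => PVM.luders_smul _ _ _ _

end Basic

def one : QFA σ Unit (fun _ => Unit) where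
  meas _ := PVM.one
  init := of fun _ _ => 1
  trace_init := by simp [trace_conjTranspose_mul_self_row]
  F := Finset.univ

lemma prob_one (w : List σ) : (one : QFA σ _ _).prob w = 1 := by
  have h : ((one : QFA σ _ _).prob w : ℂ) = 1 := by
    rw [ofReal_prob]
    exact (PVM.trace_luders_univ _ _).trans (trace_dens _ w)
  exact_mod_cast h

section Tensor

variable (A : QFA σ ι κ) (B : QFA σ ι' κ')

def tensor : QFA σ (ι × ι') (fun c => κ c × κ' c) where
  meas c := (A.meas c).tensor (B.meas c)
  init := (A.init ⊗ₖ B.init).submatrix (Equiv.prodUnique (Fin 1) (Fin 1)).symm id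
  trace_init := by
    rw [conjTranspose_mul_self_kronecker_submatrix, trace_kronecker, A.trace_init, B.trace_init,
      one_mul]
  F := A.F ×ˢ B.F

lemma run_tensor (ρ : Matrix ι ι ℂ) (τ : Matrix ι' ι' ℂ) (w : List σ) :
    (A.tensor B).run (ρ ⊗ₖ τ) w = A.run ρ w ⊗ₖ B.run τ w := by
  induction w generalizing ρ τ with
  | nil => rfl
  | cons c w ih =>
    have h : ((A.tensor B).meas (some c)).luders Finset.univ (ρ ⊗ₖ τ)
        = (A.meas (some c)).luders Finset.univ ρ ⊗ₖ (B.meas (some c)).luders Finset.univ τ := by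
      rw [← PVM.luders_tensor, Finset.univ_product_univ]
      rfl
    simp only [run, List.foldl_cons] at ih ⊢
    rw [h, ih]

lemma dens_tensor (w : List σ) : (A.tensor B).dens w = A.dens w ⊗ₖ B.dens w := by
  rw [dens, tensor, conjTranspose_mul_self_kronecker_submatrix]
  exact run_tensor A B _ _ w

lemma prob_tensor (w : List σ) : (A.tensor B).prob w = A.prob w * B.prob w := by
  have h : ((A.tensor B).prob w : ℂ) = A.prob w * B.prob w := by
    rw [ofReal_prob, ofReal_prob, ofReal_prob, dens_tensor, ← trace_kronecker,
      ← PVM.luders_tensor]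
    rfl
  exact_mod_cast h

end Tensor

section Convex

noncomputable def convex (a : ℝ) (ha₀ : 0 ≤ a) (ha₁ : a ≤ 1) (A : QFA σ ι κ) (B : QFA σ ι' κ') :
    QFA σ (ι ⊕ ι') (fun c => κ c ⊕ κ' c) where
  meas c := (A.meas c).sum (B.meas c)
  init := fromCols ((Real.sqrt a : ℂ) • A.init) ((Real.sqrt (1 - a) : ℂ) • B.init)
  trace_init := by
    rw [conjTranspose_fromCols_eq_fromRows_conjTranspose, fromRows_mul_fromCols, trace_fromBlocks,
      conjTranspose_mul_self_sqrt_smul a ha₀,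
      conjTranspose_mul_self_sqrt_smul (1 - a) (sub_nonneg.mpr ha₁), trace_smul, trace_smul,
      A.trace_init, B.trace_init]
    simp
  F := A.F.disjSum B.F

variable {a : ℝ} {ha₀ : 0 ≤ a} {ha₁ : a ≤ 1} (A : QFA σ ι κ) (B : QFA σ ι' κ')

lemma luders_convex (c : Option σ) (s : Finset (κ c)) (t : Finset (κ' c))
    (ρ : Matrix (ι ⊕ ι') (ι ⊕ ι') ℂ) :
    ((convex a ha₀ ha₁ A B).meas c).luders (s.disjSum t) ρ
      = fromBlocks ((A.meas c).luders s ρ.toBlocks₁₁) 0 0 ((B.meas c).luders t ρ.toBlocks₂₂) :=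
  PVM.luders_sum _ _ s t ρ

lemma toBlocks₁₁_run_convex (ρ : Matrix (ι ⊕ ι') (ι ⊕ ι') ℂ) (w : List σ) :
    ((convex a ha₀ ha₁ A B).run ρ w).toBlocks₁₁ = A.run ρ.toBlocks₁₁ w :=
  (List.foldl_hom toBlocks₁₁ fun _ _ => by
    rw [← Finset.univ_disjSum_univ, luders_convex, toBlocks_fromBlocks₁₁]).symm

lemma toBlocks₂₂_run_convex (ρ : Matrix (ι ⊕ ι') (ι ⊕ ι') ℂ) (w : List σ) :
    ((convex a ha₀ ha₁ A B).run ρ w).toBlocks₂₂ = B.run ρ.toBlocks₂₂ w :=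
  (List.foldl_hom toBlocks₂₂ fun _ _ => by
    rw [← Finset.univ_disjSum_univ, luders_convex, toBlocks_fromBlocks₂₂]).symm

lemma toBlocks₁₁_dens_convex (w : List σ) :
    ((convex a ha₀ ha₁ A B).dens w).toBlocks₁₁ = (a : ℂ) • A.dens w := by
  rw [dens, toBlocks₁₁_run_convex, dens, ← run_smul]
  congr 1
  simp only [convex, conjTranspose_fromCols_eq_fromRows_conjTranspose, fromRows_mul_fromCols,
    toBlocks_fromBlocks₁₁, conjTranspose_mul_self_sqrt_smul a ha₀]

lemma toBlocks₂₂_dens_convex (w : List σ) :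
    ((convex a ha₀ ha₁ A B).dens w).toBlocks₂₂ = ((1 - a : ℝ) : ℂ) • B.dens w := by
  rw [dens, toBlocks₂₂_run_convex, dens, ← run_smul]
  congr 1
  simp only [convex, conjTranspose_fromCols_eq_fromRows_conjTranspose, fromRows_mul_fromCols,
    toBlocks_fromBlocks₂₂, conjTranspose_mul_self_sqrt_smul (1 - a) (sub_nonneg.mpr ha₁)]

lemma prob_convex (w : List σ) :
    (convex a ha₀ ha₁ A B).prob w = a * A.prob w + (1 - a) * B.prob w := by
  have h : ((convex a ha₀ ha₁ A B).prob w : ℂ) = a * A.prob w + ((1 - a : ℝ) : ℂ) * B.prob w := by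
    rw [ofReal_prob, ofReal_prob, ofReal_prob,
      show (convex a ha₀ ha₁ A B).F = A.F.disjSum B.F from rfl, luders_convex, trace_fromBlocks,
      toBlocks₁₁_dens_convex, toBlocks₂₂_dens_convex, PVM.luders_smul, PVM.luders_smul,
      trace_smul, trace_smul, smul_eq_mul, smul_eq_mul]
  exact_mod_cast h

end Convex

section Reindex

def reindex (Q : QFA σ ι κ) (eι : ι ≃ ι') (eκ : ∀ c, κ c ≃ κ' c) : QFA σ ι' κ' where
  meas c := (Q.meas c).reindex (eκ c) eι
  init := Q.init.submatrix id eι.symm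
  trace_init := by
    rw [conjTranspose_submatrix, ← submatrix_mul _ _ _ _ _ Function.bijective_id,
      trace_submatrix_equiv, Q.trace_init]
  F := Q.F.map (eκ none).toEmbedding

variable (Q : QFA σ ι κ) (eι : ι ≃ ι') (eκ : ∀ c, κ c ≃ κ' c)

lemma dens_reindex (w : List σ) :
    (Q.reindex eι eκ).dens w = (Q.dens w).submatrix eι.symm eι.symm := by
  have hinit : (Q.reindex eι eκ).initᴴ * (Q.reindex eι eκ).init
      = (Q.initᴴ * Q.init).submatrix eι.symm eι.symm := by
    rw [reindex, conjTranspose_submatrix, ← submatrix_mul _ _ _ _ _ Function.bijective_id]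
  rw [dens, hinit, dens]
  exact List.foldl_hom (fun ρ : Matrix ι ι ℂ => ρ.submatrix eι.symm eι.symm) fun _ c => by
    rw [← (Q.meas (some c)).luders_reindex (eκ (some c)) eι, Finset.map_univ_equiv]
    rfl

lemma prob_reindex : (Q.reindex eι eκ).prob = Q.prob := by
  ext w
  rw [prob, prob, dens_reindex, reindex, PVM.luders_reindex, trace_submatrix_equiv]

end Reindex

def toMOnQFA {m : ℕ} {k : Option σ → ℕ} (Q : QFA σ (Fin m) (fun c => Fin (k c))) : MOnQFA σ where
  m := m
  k := k
  eig _ j := j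
  P c := (Q.meas c).P
  init := Q.init
  F := Q.F

lemma toMOnQFA_valid {m : ℕ} {k : Option σ → ℕ} (Q : QFA σ (Fin m) (fun c => Fin (k c))) :
    Q.toMOnQFA.Valid := by
  refine ⟨fun _ => Nat.cast_injective.comp Fin.val_injective, fun c => (Q.meas c).isHermitian,
    fun c => (Q.meas c).mul_self, fun c => (Q.meas c).mul_eq_zero, fun c => (Q.meas c).sum_eq_one,
    ?_⟩
  have h := Q.trace_init
  rw [trace_conjTranspose_mul_self_row] at h
  exact_mod_cast h

lemma prob_toMOnQFA {m : ℕ} {k : Option σ → ℕ} (Q : QFA σ (Fin m) (fun c => Fin (k c))) :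
    Q.toMOnQFA.prob = Q.prob :=
  rfl

lemma prob_mem_PMO (Q : QFA σ ι κ) : Q.prob ∈ PMO σ := by
  let Q' := Q.reindex (Fintype.equivFin ι) fun c => Fintype.equivFin (κ c)
  exact ⟨Q'.toMOnQFA, Q'.toMOnQFA_valid, by rw [prob_toMOnQFA, prob_reindex]⟩

end QFA

def MOnQFA.toQFA {σ : Type} (A : MOnQFA σ) (hA : A.Valid) :
    QFA σ (Fin A.m) (fun c => Fin (A.k c)) where
  meas c := ⟨A.P c, hA.2.1 c, hA.2.2.1 c, hA.2.2.2.1 c, hA.2.2.2.2.1 c⟩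
  init := A.init
  trace_init := by
    rw [trace_conjTranspose_mul_self_row]
    exact_mod_cast hA.2.2.2.2.2
  F := A.F

namespace PMO

variable {σ : Type} {φ ψ : List σ → ℝ}

lemma mem_Icc (hφ : φ ∈ PMO σ) (w : List σ) : φ w ∈ Set.Icc 0 1 := by
  obtain ⟨A, hA, rfl⟩ := hφ
  exact ⟨(A.toQFA hA).prob_nonneg w, (A.toQFA hA).prob_le_one w⟩

lemma mul (hφ : φ ∈ PMO σ) (hψ : ψ ∈ PMO σ) : (fun w => φ w * ψ w) ∈ PMO σ := by
  obtain ⟨A, hA, rfl⟩ := hφ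
  obtain ⟨B, hB, rfl⟩ := hψ
  have h := ((A.toQFA hA).tensor (B.toQFA hB)).prob_mem_PMO
  rwa [funext (QFA.prob_tensor (A.toQFA hA) (B.toQFA hB))] at h

lemma one_sub (hφ : φ ∈ PMO σ) : (fun w => 1 - φ w) ∈ PMO σ := by
  obtain ⟨A, hA, rfl⟩ := hφ
  have h := (A.toQFA hA).compl.prob_mem_PMO
  rwa [funext (A.toQFA hA).prob_compl] at h

lemma convex {a : ℝ} (ha₀ : 0 ≤ a) (ha₁ : a ≤ 1) (hφ : φ ∈ PMO σ) (hψ : ψ ∈ PMO σ) :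
    (fun w => a * φ w + (1 - a) * ψ w) ∈ PMO σ := by
  obtain ⟨A, hA, rfl⟩ := hφ
  obtain ⟨B, hB, rfl⟩ := hψ
  have h := (QFA.convex a ha₀ ha₁ (A.toQFA hA) (B.toQFA hB)).prob_mem_PMO
  rwa [funext (QFA.prob_convex (A.toQFA hA) (B.toQFA hB))] at h

lemma const {c : ℝ} (hc₀ : 0 ≤ c) (hc₁ : c ≤ 1) : (fun _ => c) ∈ PMO σ := by
  have h := (QFA.convex c hc₀ hc₁ (QFA.one (σ := σ)) QFA.one.compl).prob_mem_PMO
  simpa only [funext (QFA.prob_convex _ _), QFA.prob_compl, QFA.prob_one, sub_self, mul_zero,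
    mul_one, add_zero] using h

end PMO

def Separates {α : Type*} (φ : α → ℝ) (L : Set α) (c δ : ℝ) : Prop :=
  ∀ w, (w ∈ L → c + δ ≤ φ w) ∧ (w ∉ L → φ w ≤ c - δ)

namespace Separates

variable {α : Type*} {φ ψ : α → ℝ} {L L' : Set α} {c δ : ℝ}

lemma of_abs_sub_ge (hδ : 0 < δ) (h : ∀ w, δ ≤ |φ w - c|) : Separates φ {w | c < φ w} c δ := by
  intro w
  rcases le_abs'.mp (h w) with hw | hw
  · exact ⟨fun hlt => by linarith [show c < φ w from hlt], fun _ => by linarith⟩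
  · exact ⟨fun _ => by linarith, fun hlt => absurd (by linarith : c < φ w) hlt⟩

lemma eq_setOf (h : Separates φ L c δ) (hδ : 0 < δ) : L = {w | c < φ w} := by
  ext w
  by_cases hw : w ∈ L
  · exact iff_of_true hw (by linarith [(h w).1 hw] : c < φ w)
  · exact iff_of_false hw (by linarith [(h w).2 hw] : ¬c < φ w)

lemma abs_sub_ge (h : Separates φ L c δ) (w : α) : δ ≤ |φ w - c| := by
  by_cases hw : w ∈ L
  · exact le_abs.mpr (Or.inl (by linarith [(h w).1 hw]))
  · exact le_abs.mpr (Or.inr (by linarith [(h w).2 hw]))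

lemma mono {δ' : ℝ} (h : Separates φ L c δ) (hδ : δ' ≤ δ) : Separates φ L c δ' :=
  fun w => ⟨fun hw => by linarith [(h w).1 hw], fun hw => by linarith [(h w).2 hw]⟩

lemma compl {c' : ℝ} (h : Separates φ L c δ) (hc : c + c' = 1) :
    Separates (fun w => 1 - φ w) Lᶜ c' δ :=
  fun w => ⟨fun hw => by linarith [(h w).2 hw], fun hw => by linarith [(h w).1 (not_not.mp hw)]⟩

lemma recenter (h : Separates φ L c δ) :
    Separates (fun w => 1 / 2 * φ w + (1 - 1 / 2) * (1 - c)) L (1 / 2) (δ / 2) :=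
  fun w => ⟨fun hw => by linarith [(h w).1 hw], fun hw => by linarith [(h w).2 hw]⟩

lemma inter (h : Separates φ L (1 / 2) (1 / 4)) (h' : Separates ψ L' (1 / 2) (1 / 4))
    (hφ : ∀ w, φ w ∈ Set.Icc 0 1) (hψ : ∀ w, ψ w ∈ Set.Icc 0 1) :
    Separates (fun w => φ w * ψ w) (L ∩ L') (13 / 32) (5 / 32) := by
  intro w
  obtain ⟨hφ₀, hφ₁⟩ := hφ w
  obtain ⟨hψ₀, hψ₁⟩ := hψ w
  refine ⟨fun hw => ?_, fun hw => ?_⟩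
  · nlinarith [(h w).1 hw.1, (h' w).1 hw.2]
  · rcases not_and_or.mp hw with hw | hw
    · nlinarith [(h w).2 hw]
    · nlinarith [(h' w).2 hw]

end Separates

/-- The average of `t ∧ (t ∨ t)` and `t ∨ (t ∧ t)` for independent events of probability `t`,
written in the shape in which `PMO.amplifier` builds it. -/
noncomputable def amplifier (t : ℝ) : ℝ :=
  1 / 2 * (t * (1 - (1 - t) * (1 - t))) + (1 - 1 / 2) * (1 - (1 - t) * (1 - t * t))

lemma amplifier_half_add (y : ℝ) : amplifier (1 / 2 + y) = 1 / 2 + (5 / 4 * y - y ^ 3) := by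
  unfold amplifier
  ring

lemma amplifier_half_sub (y : ℝ) : amplifier (1 / 2 - y) = 1 / 2 - (5 / 4 * y - y ^ 3) := by
  unfold amplifier
  ring

lemma le_cubic_gain {ε y : ℝ} (hε : 0 < ε) (hε' : ε ≤ 1 / 4) (hy : ε ≤ y) (hy' : y ≤ 1 / 2) :
    9 / 8 * ε ≤ 5 / 4 * y - y ^ 3 := by
  -- `y ↦ 5y/4 - y³` is increasing on `[0, 1/2]`, and `ε³ ≤ ε/16`
  nlinarith [mul_nonneg (sub_nonneg.mpr hy) (by nlinarith : (0 : ℝ) ≤ 5 / 4 - (y ^ 2 + y * ε + ε ^ 2)),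
    mul_nonneg (mul_nonneg hε.le hε.le) (sub_nonneg.mpr hε')]

lemma Separates.amplifier {α : Type*} {φ : α → ℝ} {L : Set α} {ε : ℝ}
    (h : Separates φ L (1 / 2) ε) (hφ : ∀ w, φ w ∈ Set.Icc 0 1) (hε : 0 < ε) (hε' : ε ≤ 1 / 4) :
    Separates (fun w => amplifier (φ w)) L (1 / 2) (9 / 8 * ε) := by
  intro w
  obtain ⟨hφ₀, hφ₁⟩ := hφ w
  dsimp only
  refine ⟨fun hw => ?_, fun hw => ?_⟩
  · have hy := (h w).1 hw
    have := le_cubic_gain hε hε' (y := φ w - 1 / 2) (by linarith) (by linarith)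
    rw [show φ w = 1 / 2 + (φ w - 1 / 2) by ring, amplifier_half_add]
    linarith
  · have hy := (h w).2 hw
    have := le_cubic_gain hε hε' (y := 1 / 2 - φ w) (by linarith) (by linarith)
    rw [show φ w = 1 / 2 - (1 / 2 - φ w) by ring, amplifier_half_sub]
    linarith

namespace PMO

variable {σ : Type} {φ : List σ → ℝ} {L : Set (List σ)}

lemma amplifier (hφ : φ ∈ PMO σ) : (fun w => amplifier (φ w)) ∈ PMO σ :=
  convex (by norm_num) (by norm_num) (mul hφ (one_sub (mul (one_sub hφ) (one_sub hφ))))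
    (one_sub (mul (one_sub hφ) (one_sub (mul hφ hφ))))

lemma exists_separates_quarter (hφ : φ ∈ PMO σ) {ε : ℝ} (hε : 0 < ε)
    (h : Separates φ L (1 / 2) ε) : ∃ ψ ∈ PMO σ, Separates ψ L (1 / 2) (1 / 4) := by
  obtain ⟨n, hn⟩ := pow_unbounded_of_one_lt (1 / 4 / ε) (by norm_num : (1 : ℝ) < 9 / 8)
  rw [div_lt_iff₀ hε] at hn
  induction n generalizing φ ε with
  | zero => exact ⟨φ, hφ, h.mono (by simpa using hn.le)⟩
  | succ n ih =>
    by_cases hε' : 1 / 4 ≤ ε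
    · exact ⟨φ, hφ, h.mono hε'⟩
    · refine ih (amplifier hφ) (by positivity) (h.amplifier (mem_Icc hφ) hε (not_le.mp hε').le) ?_
      rw [pow_succ] at hn
      linarith

end PMO

lemma exists_separates_of_mem_LMO {σ : Type} {L : Set (List σ)} (hL : L ∈ LMO σ) :
    ∃ φ ∈ PMO σ, Separates φ L (1 / 2) (1 / 4) := by
  obtain ⟨A, hA, c, δ, hc₀, hδ, hiso, rfl⟩ := hL
  have hsep : Separates A.prob {w | c < A.prob w} c δ := Separates.of_abs_sub_ge hδ hiso
  rcases le_or_gt c 1 with hc | hc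
  · exact PMO.exists_separates_quarter
      (PMO.convex (by norm_num) (by norm_num) ⟨A, hA, rfl⟩ (PMO.const (by linarith) (by linarith)))
      (by positivity) hsep.recenter
  · -- a cut-point above `1` isolates the empty language
    refine ⟨fun _ => 0, PMO.const le_rfl zero_le_one, fun w => ⟨fun hw => ?_, fun _ => by norm_num⟩⟩
    linarith [(PMO.mem_Icc ⟨A, hA, rfl⟩ w).2, show c < A.prob w from hw]

lemma Separates.mem_LMO {σ : Type} {φ : List σ → ℝ} {L : Set (List σ)} {c δ : ℝ}
    (h : Separates φ L c δ) (hφ : φ ∈ PMO σ) (hc : 0 < c) (hδ : 0 < δ) : L ∈ LMO σ := by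
  obtain ⟨A, hA, rfl⟩ := hφ
  exact ⟨A, hA, c, δ, hc, hδ, h.abs_sub_ge, h.eq_setOf hδ⟩

theorem lmo_closed_boolean_operations_general
    (σ : Type) (L₁ L₂ : Set (List σ))
    (h₁ : L₁ ∈ LMO σ) (h₂ : L₂ ∈ LMO σ) :
    L₁ ∩ L₂ ∈ LMO σ ∧ L₁ ∪ L₂ ∈ LMO σ ∧ L₁ᶜ ∈ LMO σ := by
  obtain ⟨φ₁, hφ₁, s₁⟩ := exists_separates_of_mem_LMO h₁
  obtain ⟨φ₂, hφ₂, s₂⟩ := exists_separates_of_mem_LMO h₂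
  have hinter := s₁.inter s₂ (PMO.mem_Icc hφ₁) (PMO.mem_Icc hφ₂)
  have hunion := ((s₁.compl (by norm_num)).inter (s₂.compl (by norm_num))
    (PMO.mem_Icc (PMO.one_sub hφ₁)) (PMO.mem_Icc (PMO.one_sub hφ₂))).compl (c' := 19 / 32)
    (by norm_num)
  rw [← Set.compl_union, compl_compl] at hunion
  refine ⟨hinter.mem_LMO (PMO.mul hφ₁ hφ₂) (by norm_num) (by norm_num),
    hunion.mem_LMO (PMO.one_sub (PMO.mul (PMO.one_sub hφ₁) (PMO.one_sub hφ₂))) (by norm_num)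
      (by norm_num),
    (s₁.compl (c' := 1 / 2) (by norm_num)).mem_LMO (PMO.one_sub hφ₁) (by norm_num) (by norm_num)⟩

/-- For a finite nonempty alphabet `Σ`, the class `LMO(Σ)` is closed
under intersection, union and complement. -/
theorem lmo_closed_boolean_operations
    (σ : Type) [Fintype σ] [Nonempty σ] (L₁ L₂ : Set (List σ))
    (h₁ : L₁ ∈ LMO σ) (h₂ : L₂ ∈ LMO σ) :
    L₁ ∩ L₂ ∈ LMO σ ∧ L₁ ∪ L₂ ∈ LMO σ ∧ L₁ᶜ ∈ LMO σ :=
  lmo_closed_boolean_operations_general σ L₁ L₂ h₁ h₂
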